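/- Fix n ≥ 2. The map sending an irreducible numerical semigroup S with Frobenius number n to T(S) = ⟨{a : a is a minimal generator of S and a < n/2}⟩ is a bijection from the set of irreducible numerical semigroups with Frobenius number n onto the set of numerical semigroups T with n ∉ T all of whose minimal generators are strictly less than n/2. Moreover, under this bijection, the number of minimal generators of S that are less than n/2 equals the embedding dimension e(T(S)). In particular, for each i ≥ 0 the number of irreducible numerical semigroups with Frobenius number n having exactly i minimal generators less than n/2 equals the number of numerical semigroups T with n ∉ T, embedding dimension i, and all minimal generators less than n/2. -/

import Mathlib

open Filter Topology
open scoped Classical BigOperators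

/-- The set of gaps of a numerical semigroup `S ⊆ ℕ`. -/
def gapSet (S : AddSubmonoid ℕ) : Set ℕ := {n : ℕ | n ∉ S}

/-- `S` is cofinite if its set of gaps is finite. -/
def IsCofinite (S : AddSubmonoid ℕ) : Prop := (gapSet S).Finite

/-- The minimal generators of `S`: nonzero elements of `S` that are not the
sum of two nonzero elements of `S`. -/
def minGens (S : AddSubmonoid ℕ) : Set ℕ :=
  {s : ℕ | s ∈ S ∧ s ≠ 0 ∧ ¬ ∃ a ∈ S, ∃ b ∈ S, a ≠ 0 ∧ b ≠ 0 ∧ s = a + b}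

/-- The embedding dimension `e(S)`: the number of minimal generators of `S`. -/
noncomputable def embDim (S : AddSubmonoid ℕ) : ℕ := (minGens S).ncard

/-- The genus `g(S)`: the number of gaps of `S` (junk value `0` if `S` is not cofinite). -/
noncomputable def genus (S : AddSubmonoid ℕ) : ℕ := (gapSet S).ncard

/-- The Frobenius number `F(S)`: the largest gap of `S`
(junk value `0` if `S` is not cofinite or `S = ℕ`). -/
noncomputable def frob (S : AddSubmonoid ℕ) : ℕ := sSup (gapSet S)

/-- A cofinite numerical semigroup `S ≠ ℕ` is irreducible if it is maximal with
respect to inclusion among numerical semigroups with Frobenius number `F(S)`. -/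
def IsIrred (S : AddSubmonoid ℕ) : Prop :=
  IsCofinite S ∧ S ≠ ⊤ ∧
    ∀ T : AddSubmonoid ℕ, S ≤ T → frob T = frob S → T = S

/-- The number of gaps of `S` that are at most `M`. -/
noncomputable def gapsUpTo (S : AddSubmonoid ℕ) (M : ℕ) : ℕ :=
  {x : ℕ | x ∉ S ∧ x ≤ M}.ncard

/-- The probability weight of a generating set `B ⊆ {1, …, M}` in the ER-type
model `S(M, p)`. -/
noncomputable def wt (p : ℝ) (M : ℕ) (B : Finset ℕ) : ℝ :=
  p ^ B.card * (1 - p) ^ (M - B.card)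

/-- The probability in the ER-type model `S(M, p)` that the random numerical
semigroup `𝒮 = ⟨𝒜⟩` lies in the event `E`. -/
noncomputable def probEvent (M : ℕ) (p : ℝ) (E : Set (AddSubmonoid ℕ)) : ℝ :=
  ∑ B ∈ (Finset.Icc 1 M).powerset,
    if AddSubmonoid.closure (B : Set ℕ) ∈ E then wt p M B else 0

/-- The expectation in the ER-type model `S(M, p)` of an invariant `X` of the
random numerical semigroup `𝒮 = ⟨𝒜⟩`. -/
noncomputable def expectVal (M : ℕ) (p : ℝ) (X : AddSubmonoid ℕ → ℕ) : ℝ :=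
  ∑ B ∈ (Finset.Icc 1 M).powerset,
    (X (AddSubmonoid.closure (B : Set ℕ)) : ℝ) * wt p M B

/-- `h_{n,i}`: the number of numerical semigroups `T` with `n ∉ T`, embedding
dimension `i`, and all minimal generators strictly less than `n/2`. -/
noncomputable def hvec (n i : ℕ) : ℕ :=
  {T : AddSubmonoid ℕ | n ∉ T ∧ embDim T = i ∧ ∀ a ∈ minGens T, 2 * a < n}.ncard

/-- `a_n(p)`: the probability that `n` is not in the semigroup generated by a
random subset of `{1, …, n-1}` chosen with inclusion probability `p`. -/
noncomputable def anp (n : ℕ) (p : ℝ) : ℝ :=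
  ∑ A ∈ (Finset.Icc 1 (n - 1)).powerset,
    if n ∉ AddSubmonoid.closure (A : Set ℕ) then
      p ^ A.card * (1 - p) ^ (n - 1 - A.card) else 0

/-!
An irreducible numerical semigroup `S` with Frobenius number `n` is determined by its elements
below `n / 2`: by maximality, `x > n / 2` lies in `S` exactly when `n - x ∉ S`. Conversely, adding
to any `T` with `n ∉ T` every `x > n / 2` with `n - x ∉ T` yields an irreducible semigroup with
Frobenius number `n` and the same elements below `n / 2`. The elements of `S` below `n / 2` are
generated by the minimal generators of `S` below `n / 2`, and these remain minimal generators of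
the semigroup they generate, which gives both the inverse bijection and `e(T(S))`.
-/

section MinGens

variable {S : AddSubmonoid ℕ}

lemma minGens_closure_subset (A : Set ℕ) : minGens (AddSubmonoid.closure A) ⊆ A := by
  rintro s ⟨hs, hs0, hirr⟩
  by_contra hsA
  -- removing a minimal generator from a submonoid leaves a submonoid
  let N : AddSubmonoid ℕ :=
    { carrier := {x | x ∈ AddSubmonoid.closure A ∧ x ≠ s}
      zero_mem' := ⟨zero_mem _, Ne.symm hs0⟩
      add_mem' := by
        rintro a b ⟨ha, has⟩ ⟨hb, hbs⟩
        refine ⟨add_mem ha hb, fun hab => hirr ⟨a, ha, b, hb, ?_, ?_, hab.symm⟩⟩ <;> omega }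
  have hAN : AddSubmonoid.closure A ≤ N := AddSubmonoid.closure_le.mpr fun a ha =>
    ⟨AddSubmonoid.subset_closure ha, fun h => hsA (h ▸ ha)⟩
  exact (hAN hs).2 rfl

lemma minGens_closure_of_subset_minGens {A : Set ℕ} (hA : A ⊆ minGens S) :
    minGens (AddSubmonoid.closure A) = A := by
  refine (minGens_closure_subset A).antisymm fun a ha => ?_
  obtain ⟨haS, ha0, hirr⟩ := hA ha
  have hAS : AddSubmonoid.closure A ≤ S := AddSubmonoid.closure_le.mpr fun b hb => (hA hb).1
  refine ⟨AddSubmonoid.subset_closure ha, ha0, ?_⟩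
  rintro ⟨u, hu, v, hv, hu0, hv0, rfl⟩
  exact hirr ⟨u, hAS hu, v, hAS hv, hu0, hv0, rfl⟩

lemma mem_closure_minGens_inter {D : Set ℕ} (hD : IsLowerSet D) {s : ℕ} (hs : s ∈ S)
    (hsD : s ∈ D) : s ∈ AddSubmonoid.closure (minGens S ∩ D) := by
  induction s using Nat.strong_induction_on with
  | _ s ih =>
    rcases Nat.eq_zero_or_pos s with rfl | hspos
    · exact zero_mem _
    by_cases hsplit : ∃ a ∈ S, ∃ b ∈ S, a ≠ 0 ∧ b ≠ 0 ∧ s = a + b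
    · obtain ⟨a, ha, b, hb, ha0, hb0, rfl⟩ := hsplit
      exact add_mem (ih a (by omega) ha (hD (by omega) hsD))
        (ih b (by omega) hb (hD (by omega) hsD))
    · exact AddSubmonoid.subset_closure ⟨⟨hs, hspos.ne', hsplit⟩, hsD⟩

lemma closure_minGens_inter_le (D : Set ℕ) : AddSubmonoid.closure (minGens S ∩ D) ≤ S :=
  AddSubmonoid.closure_le.mpr fun _ ha => ha.1.1

lemma mem_closure_minGens_inter_iff {D : Set ℕ} (hD : IsLowerSet D) {x : ℕ} (hx : x ∈ D) :
    x ∈ AddSubmonoid.closure (minGens S ∩ D) ↔ x ∈ S :=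
  ⟨fun h => closure_minGens_inter_le D h, fun h => mem_closure_minGens_inter hD h hx⟩

lemma closure_minGens_inter_of_minGens_subset {D : Set ℕ} (hS : minGens S ⊆ D) :
    AddSubmonoid.closure (minGens S ∩ D) = S := by
  refine le_antisymm (closure_minGens_inter_le D) fun s hs => ?_
  have hs' := mem_closure_minGens_inter isLowerSet_univ hs (Set.mem_univ s)
  rwa [Set.inter_univ, ← Set.inter_eq_left.mpr hS] at hs'

lemma closure_minGens_inter_congr {D : Set ℕ} (hD : IsLowerSet D) {U : AddSubmonoid ℕ}
    (h : ∀ x ∈ D, x ∈ S ↔ x ∈ U) :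
    AddSubmonoid.closure (minGens S ∩ D) = AddSubmonoid.closure (minGens U ∩ D) := by
  refine le_antisymm (AddSubmonoid.closure_le.mpr fun a ha => ?_)
    (AddSubmonoid.closure_le.mpr fun a ha => ?_)
  · exact (mem_closure_minGens_inter_iff hD ha.2).mpr ((h a ha.2).mp ha.1.1)
  · exact (mem_closure_minGens_inter_iff hD ha.2).mpr ((h a ha.2).mpr ha.1.1)

end MinGens

section Frobenius

variable {S : AddSubmonoid ℕ}

lemma frob_eq_of_forall_le {n : ℕ} (hn : n ∉ S) (h : ∀ x ∉ S, x ≤ n) : frob S = n :=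
  le_antisymm (csSup_le ⟨n, hn⟩ h) (le_csSup ⟨n, h⟩ hn)

lemma frob_notMem (hS : IsCofinite S) (hne : S ≠ ⊤) : frob S ∉ S := by
  have hgap : (gapSet S).Nonempty := by
    by_contra hempty
    exact hne (eq_top_iff.mpr fun x _ => by_contra fun hx => hempty ⟨x, hx⟩)
  exact Nat.sSup_mem hgap hS.bddAbove

lemma frob_top : frob ⊤ = 0 := by
  simp [frob, gapSet]

end Frobenius

section IrredCompletion

/-- For `n ∉ T`, the irreducible numerical semigroup with Frobenius number `n` that agrees with
`T` below `n / 2`. -/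
def irredCompletion (n : ℕ) (T : AddSubmonoid ℕ) : AddSubmonoid ℕ where
  carrier := {x | x ∈ T ∨ (n < 2 * x ∧ ∀ t ∈ T, t + x ≠ n)}
  zero_mem' := Or.inl T.zero_mem
  add_mem' := by
    rintro x y (hx | ⟨hx, hxT⟩) (hy | ⟨hy, hyT⟩)
    · exact Or.inl (add_mem hx hy)
    · exact Or.inr ⟨by omega, fun t ht h => hyT (t + x) (add_mem ht hx) (by omega)⟩
    · exact Or.inr ⟨by omega, fun t ht h => hxT (t + y) (add_mem ht hy) (by omega)⟩
    · exact Or.inr ⟨by omega, fun t _ h => by omega⟩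

variable {n : ℕ} {T : AddSubmonoid ℕ}

lemma le_irredCompletion : T ≤ irredCompletion n T := fun _ hx => Or.inl hx

lemma mem_irredCompletion_of_lt {x : ℕ} (hx : n < x) : x ∈ irredCompletion n T :=
  Or.inr ⟨by omega, fun t _ h => by omega⟩

lemma mem_irredCompletion_iff (hnT : n ∉ T) {x : ℕ} :
    x ∈ irredCompletion n T ↔ (2 * x < n ∧ x ∈ T) ∨ (n < 2 * x ∧ ∀ t ∈ T, t + x ≠ n) := by
  refine ⟨fun hx => ?_, fun hx => hx.imp And.right id⟩
  rcases hx with hxT | hx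
  · rcases lt_trichotomy (2 * x) n with hlt | heq | hgt
    · exact Or.inl ⟨hlt, hxT⟩
    · exact absurd ((by omega : x + x = n) ▸ add_mem hxT hxT) hnT
    · exact Or.inr ⟨hgt, fun t ht h => hnT (h ▸ add_mem ht hxT)⟩
  · exact Or.inr hx

lemma mem_irredCompletion_iff_of_lt (hnT : n ∉ T) {x : ℕ} (hx : 2 * x < n) :
    x ∈ irredCompletion n T ↔ x ∈ T := by
  rw [mem_irredCompletion_iff hnT]
  exact ⟨fun h => (h.resolve_right fun h' => by omega).2, fun h => Or.inl ⟨hx, h⟩⟩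

lemma notMem_irredCompletion (hnT : n ∉ T) : n ∉ irredCompletion n T := by
  rw [mem_irredCompletion_iff hnT]
  rintro (⟨h, _⟩ | ⟨_, h⟩)
  · omega
  · exact h 0 T.zero_mem (zero_add n)

lemma frob_irredCompletion (hnT : n ∉ T) : frob (irredCompletion n T) = n :=
  frob_eq_of_forall_le (notMem_irredCompletion hnT) fun _ hx =>
    not_lt.mp fun hlt => hx (mem_irredCompletion_of_lt hlt)

lemma irredCompletion_congr {U : AddSubmonoid ℕ} (hnT : n ∉ T) (hnU : n ∉ U)
    (h : ∀ x, 2 * x < n → (x ∈ T ↔ x ∈ U)) : irredCompletion n T = irredCompletion n U := by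
  ext x
  rw [mem_irredCompletion_iff hnT, mem_irredCompletion_iff hnU]
  refine or_congr (and_congr_right fun hx => h x hx) (and_congr_right fun hx => ?_)
  refine forall_congr' fun t => ?_
  by_cases htx : t + x = n
  · simpa only [htx, ne_eq, not_true_eq_false, imp_false] using not_congr (h t (by omega))
  · simp [htx]

lemma irredCompletion_idem (hnT : n ∉ T) :
    irredCompletion n (irredCompletion n T) = irredCompletion n T :=
  irredCompletion_congr (notMem_irredCompletion hnT) hnT fun _ hx =>
    mem_irredCompletion_iff_of_lt hnT hx

lemma le_of_irredCompletion_eq {S : AddSubmonoid ℕ} (hS : irredCompletion n S = S)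
    (hST : S ≤ T) (hnT : n ∉ T) : T ≤ S := by
  intro x hxT
  by_contra hxS
  rcases lt_trichotomy (2 * x) n with hlt | heq | hgt
  · have hcompl : n - x ∈ S := hS ▸ Or.inr ⟨by omega, fun t ht h => hxS ((by omega : t = x) ▸ ht)⟩
    exact hnT ((by omega : x + (n - x) = n) ▸ add_mem hxT (hST hcompl))
  · exact hnT ((by omega : x + x = n) ▸ add_mem hxT hxT)
  · exact hxS (hS ▸ Or.inr ⟨hgt, fun t ht h => hnT (h ▸ add_mem (hST ht) hxT)⟩)

lemma isIrred_and_frob_eq_iff {S : AddSubmonoid ℕ} :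
    IsIrred S ∧ frob S = n ↔ n ∉ S ∧ irredCompletion n S = S := by
  constructor
  · rintro ⟨⟨hcof, hne, hmax⟩, rfl⟩
    have hF : frob S ∉ S := frob_notMem hcof hne
    exact ⟨hF, hmax _ le_irredCompletion (frob_irredCompletion hF)⟩
  · rintro ⟨hnS, hS⟩
    have hgap : ∀ x ∉ S, x ≤ n := fun x hx =>
      not_lt.mp fun hlt => hx (hS ▸ mem_irredCompletion_of_lt hlt)
    have hcof : IsCofinite S := (Set.finite_Iic n).subset hgap
    have hfrob : frob S = n := frob_eq_of_forall_le hnS hgap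
    refine ⟨⟨hcof, fun h => hnS (h ▸ AddSubmonoid.mem_top n), fun U hSU hU => ?_⟩, hfrob⟩
    have hUtop : U ≠ ⊤ := by
      rintro rfl
      have hn0 : n = 0 := by rw [← hfrob, ← hU, frob_top]
      exact hnS (hn0 ▸ S.zero_mem)
    have hnU : n ∉ U :=
      hfrob ▸ hU ▸ frob_notMem (hcof.subset fun x hx hxS => hx (hSU hxS)) hUtop
    exact le_antisymm (le_of_irredCompletion_eq hS hSU hnU) hSU

end IrredCompletion

section SmallGenClosure

def smallGenClosure (n : ℕ) (S : AddSubmonoid ℕ) : AddSubmonoid ℕ :=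
  AddSubmonoid.closure {a : ℕ | a ∈ minGens S ∧ 2 * a < n}

variable {n : ℕ} {S : AddSubmonoid ℕ}

lemma isLowerSet_two_mul_lt (n : ℕ) : IsLowerSet {a : ℕ | 2 * a < n} :=
  fun _ _ hba ha => lt_of_le_of_lt (Nat.mul_le_mul_left 2 hba) ha

lemma smallGenClosure_le : smallGenClosure n S ≤ S :=
  closure_minGens_inter_le _

lemma mem_smallGenClosure_iff {x : ℕ} (hx : 2 * x < n) : x ∈ smallGenClosure n S ↔ x ∈ S :=
  mem_closure_minGens_inter_iff (isLowerSet_two_mul_lt n) hx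

lemma minGens_smallGenClosure :
    minGens (smallGenClosure n S) = {a : ℕ | a ∈ minGens S ∧ 2 * a < n} :=
  minGens_closure_of_subset_minGens fun _ ha => ha.1

lemma embDim_smallGenClosure :
    embDim (smallGenClosure n S) = {a : ℕ | a ∈ minGens S ∧ 2 * a < n}.ncard :=
  congrArg Set.ncard minGens_smallGenClosure

lemma irredCompletion_smallGenClosure (hnS : n ∉ S) :
    irredCompletion n (smallGenClosure n S) = irredCompletion n S :=
  irredCompletion_congr (fun h => hnS (smallGenClosure_le h)) hnS fun _ hx =>
    mem_smallGenClosure_iff hx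

lemma smallGenClosure_irredCompletion {T : AddSubmonoid ℕ} (hnT : n ∉ T)
    (hT : ∀ a ∈ minGens T, 2 * a < n) : smallGenClosure n (irredCompletion n T) = T :=
  calc smallGenClosure n (irredCompletion n T)
      = smallGenClosure n T :=
        closure_minGens_inter_congr (isLowerSet_two_mul_lt n) fun _ hx =>
          mem_irredCompletion_iff_of_lt hnT hx
    _ = T := closure_minGens_inter_of_minGens_subset hT

lemma bijOn_smallGenClosure (n : ℕ) :
    Set.BijOn (smallGenClosure n) {S | IsIrred S ∧ frob S = n}
      {T | n ∉ T ∧ ∀ a ∈ minGens T, 2 * a < n} := by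
  refine Set.InvOn.bijOn (f' := irredCompletion n) ⟨fun S hS => ?_, fun T hT => ?_⟩
    (fun S hS => ?_) (fun T hT => ?_)
  · obtain ⟨hnS, hS⟩ := isIrred_and_frob_eq_iff.mp hS
    exact (irredCompletion_smallGenClosure hnS).trans hS
  · exact smallGenClosure_irredCompletion hT.1 hT.2
  · refine ⟨fun h => (isIrred_and_frob_eq_iff.mp hS).1 (smallGenClosure_le h), ?_⟩
    exact minGens_smallGenClosure (n := n) ▸ fun a ha => ha.2
  · exact isIrred_and_frob_eq_iff.mpr ⟨notMem_irredCompletion hT.1, irredCompletion_idem hT.1⟩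

end SmallGenClosure

theorem statement6_general (n : ℕ) :
    Set.BijOn (fun S : AddSubmonoid ℕ =>
        AddSubmonoid.closure {a : ℕ | a ∈ minGens S ∧ 2 * a < n})
      {S : AddSubmonoid ℕ | IsIrred S ∧ frob S = n}
      {T : AddSubmonoid ℕ | n ∉ T ∧ ∀ a ∈ minGens T, 2 * a < n} ∧
    (∀ S : AddSubmonoid ℕ, IsIrred S → frob S = n →
      {a : ℕ | a ∈ minGens S ∧ 2 * a < n}.ncard
        = embDim (AddSubmonoid.closure {a : ℕ | a ∈ minGens S ∧ 2 * a < n})) ∧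
    (∀ i : ℕ,
      {S : AddSubmonoid ℕ | IsIrred S ∧ frob S = n ∧
          {a : ℕ | a ∈ minGens S ∧ 2 * a < n}.ncard = i}.ncard = hvec n i) := by
  have hbij := bijOn_smallGenClosure n
  refine ⟨hbij, fun S _ _ => embDim_smallGenClosure.symm, fun i => ?_⟩
  have hsub : {T : AddSubmonoid ℕ | n ∉ T ∧ embDim T = i ∧ ∀ a ∈ minGens T, 2 * a < n} ⊆
      {T | n ∉ T ∧ ∀ a ∈ minGens T, 2 * a < n} := fun T hT => ⟨hT.1, hT.2.2⟩
  rw [hvec, ← (hbij.subset_right hsub).ncard_eq]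
  congr 1
  ext S
  refine ⟨fun ⟨hirr, hfrob, hcard⟩ => ⟨⟨hirr, hfrob⟩, ?_⟩, fun ⟨hS, hT⟩ => ⟨hS.1, hS.2, ?_⟩⟩
  · obtain ⟨hnT, hT⟩ := hbij.mapsTo ⟨hirr, hfrob⟩
    exact ⟨hnT, embDim_smallGenClosure.trans hcard, hT⟩
  · exact embDim_smallGenClosure.symm.trans hT.2.1

theorem statement6 (n : ℕ) (hn : 2 ≤ n) :
    Set.BijOn (fun S : AddSubmonoid ℕ =>
        AddSubmonoid.closure {a : ℕ | a ∈ minGens S ∧ 2 * a < n})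
      {S : AddSubmonoid ℕ | IsIrred S ∧ frob S = n}
      {T : AddSubmonoid ℕ | n ∉ T ∧ ∀ a ∈ minGens T, 2 * a < n} ∧
    (∀ S : AddSubmonoid ℕ, IsIrred S → frob S = n →
      {a : ℕ | a ∈ minGens S ∧ 2 * a < n}.ncard
        = embDim (AddSubmonoid.closure {a : ℕ | a ∈ minGens S ∧ 2 * a < n})) ∧
    (∀ i : ℕ,
      {S : AddSubmonoid ℕ | IsIrred S ∧ frob S = n ∧
          {a : ℕ | a ∈ minGens S ∧ 2 * a < n}.ncard = i}.ncard = hvec n i) :=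
  statement6_general n
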